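/- arXiv:2303.09571 — 2 statements merged into one kernel-verified Lean document; each statement's English description precedes it below -/
import Mathlib

section
/- Let u_h > 0 and set χ = 2 u_h^6 + 3(9 + √(81 + 12 u_h^6)). Then the number u_+ = (1/3)·( u_h³ + (2/χ)^{1/3} u_h^5 + (2/χ)^{−1/3} u_h ) is positive and satisfies 1 + u_+² − u_+³/u_h³ = 0; that is, u_+ is the (unique) positive root of the d = 4 blackening function h(u) = 1 + u² − u³/u_h³. -/
/-!
Clearing denominators, `h(u) = 0` reads `u³ = a³(1 + u²)` with `a = u_h`. Substituting
`u = (a³ + w)/3` gives the depressed cubic `w³ = 3a⁶ w + 2a⁹ + 27a³`, which Cardano's ansatz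
`w = y a⁵ + a / y` solves as soon as `q = y³` is a root of the resolvent quadratic
`a¹² q² − (2a⁶ + 27) q + 1 = 0`; the root `q = 2/χ` is the one chosen in the closed form.
Uniqueness holds because `u ↦ u³/(1 + u²)` is injective on `u > 0`.
-/

open Real

noncomputable def blackening (uh u : ℝ) : ℝ := 1 + u ^ 2 - u ^ 3 / uh ^ 3

theorem blackening_eq_zero_iff {uh u : ℝ} (huh : uh ≠ 0) :
    blackening uh u = 0 ↔ u ^ 3 = uh ^ 3 * (1 + u ^ 2) := by
  unfold blackening
  constructor <;> intro h
  · field_simp at h; linear_combination -h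
  · field_simp; linear_combination -h

theorem eq_of_pow_three_eq_mul_one_add_sq {c u v : ℝ} (hu : 0 < u) (hv : 0 < v)
    (hu3 : u ^ 3 = c * (1 + u ^ 2)) (hv3 : v ^ 3 = c * (1 + v ^ 2)) : u = v := by
  have hfac : (u - v) * (u ^ 2 + u * v + v ^ 2 + u ^ 2 * v ^ 2) = 0 := by
    linear_combination (1 + v ^ 2) * hu3 - (1 + u ^ 2) * hv3
  have hpos : 0 < u ^ 2 + u * v + v ^ 2 + u ^ 2 * v ^ 2 := by positivity
  linarith [(mul_eq_zero.mp hfac).resolve_right hpos.ne']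

theorem cardano_resolvent {a χ : ℝ} (hχ : χ = 2 * a ^ 6 + 3 * (9 + √(81 + 12 * a ^ 6))) :
    0 < χ ∧ χ ^ 2 - (4 * a ^ 6 + 54) * χ + 4 * a ^ 12 = 0 := by
  have hs : √(81 + 12 * a ^ 6) ^ 2 = 81 + 12 * a ^ 6 := sq_sqrt (by positivity)
  refine ⟨by rw [hχ]; positivity, ?_⟩
  rw [hχ]
  linear_combination 9 * hs

theorem cardano_root {a y χ : ℝ} (hy3 : y ^ 3 * χ = 2)
    (hχ : χ ^ 2 - (4 * a ^ 6 + 54) * χ + 4 * a ^ 12 = 0) :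
    ((a ^ 3 + y * a ^ 5 + a / y) / 3) ^ 3 = a ^ 3 * (1 + ((a ^ 3 + y * a ^ 5 + a / y) / 3) ^ 2) := by
  have hy : y ≠ 0 := by rintro rfl; norm_num at hy3
  have hresolvent : y ^ 3 * a ^ 15 + a ^ 3 / y ^ 3 = 2 * a ^ 9 + 27 * a ^ 3 := by
    have hχy : χ = 2 / y ^ 3 := by field_simp; linear_combination hy3
    rw [hχy] at hχ
    field_simp at hχ ⊢
    linear_combination (a ^ 3 / 4) * hχ
  have hw : (y * a ^ 5 + a / y) ^ 3 = 3 * a ^ 6 * (y * a ^ 5 + a / y) + 2 * a ^ 9 + 27 * a ^ 3 := by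
    rw [add_assoc _ (2 * a ^ 9), ← hresolvent]; field_simp; ring
  linear_combination hw / 27

theorem rpow_one_third_pow_three {x : ℝ} (hx : 0 ≤ x) : (x ^ ((1 : ℝ) / 3)) ^ 3 = x := by
  rw [one_div]
  exact_mod_cast rpow_inv_natCast_pow hx three_ne_zero

/-- Closed-form (Cardano) expression for the unique positive root of the `d = 4`
blackening function `h(u) = 1 + u² − u³/u_h³`. -/
theorem cardano_root_d4 (uh : ℝ) (huh : 0 < uh) (χ up : ℝ)
    (hχ : χ = 2 * uh ^ 6 + 3 * (9 + Real.sqrt (81 + 12 * uh ^ 6)))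
    (hup : up = (1 / 3) * (uh ^ 3 + (2 / χ) ^ ((1 : ℝ) / 3) * uh ^ 5
        + (2 / χ) ^ (-(1 : ℝ) / 3) * uh)) :
    0 < up ∧ 1 + up ^ 2 - up ^ 3 / uh ^ 3 = 0 ∧
      ∀ v : ℝ, 0 < v → 1 + v ^ 2 - v ^ 3 / uh ^ 3 = 0 → v = up := by
  obtain ⟨hχ0, hres⟩ := cardano_resolvent hχ
  have hq : 0 < 2 / χ := by positivity
  set y := (2 / χ) ^ ((1 : ℝ) / 3)
  have hy : 0 < y := by positivity
  have hy3 : y ^ 3 * χ = 2 := by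
    rw [rpow_one_third_pow_three hq.le]; field_simp
  replace hup : up = (uh ^ 3 + y * uh ^ 5 + uh / y) / 3 := by
    rw [hup, neg_div, rpow_neg hq.le]; ring
  have hup0 : 0 < up := by rw [hup]; positivity
  have hroot : up ^ 3 = uh ^ 3 * (1 + up ^ 2) := hup ▸ cardano_root hy3 hres
  refine ⟨hup0, (blackening_eq_zero_iff huh.ne').2 hroot, fun v hv hv0 => ?_⟩
  exact eq_of_pow_three_eq_mul_one_add_sq hv hup0 ((blackening_eq_zero_iff huh.ne').1 hv0) hroot
end

section
/- Let d ≥ 4 be an integer, u_h > 0, and h(y) = 1 + y² − y^{d−1}/u_h^{d−1}. Let (a, b) ⊆ (0, π) and let u : (a, b) → ℝ be twice continuously differentiable with u(μ) > 0 and h(u(μ)) > 0 for all μ ∈ (a, b). Define the area-density Lagrangian L(μ, y, p) = (y sin μ)^{−(d−1)} √(y² + p²/h(y)). Then u satisfies the Euler–Lagrange equation (d/dμ)[∂L/∂p (μ, u(μ), u'(μ))] = ∂L/∂y (μ, u(μ), u'(μ)) at every μ ∈ (a, b) if and only if it satisfies, at every μ ∈ (a, b), the ordinary differential equation u'' = −(d−2)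 h(u) u + u'·((d−1) cot μ − (d−3) u'/u) + (u'/u)² · (u² h'(u) + 2(d−1) cot(μ) u') / (2 h(u)). -/
set_option maxHeartbeats 1000000

/-- Area-density Lagrangian for surfaces parametrized as `u = u(μ)`:
`L(μ, y, p) = (y sin μ)^(−(d−1)) √(y² + p²/h(y))` with
`h(y) = 1 + y² − y^(d−1)/u_h^(d−1)`. -/
noncomputable def areaLagrangianU (d : ℕ) (uh : ℝ) (m y p : ℝ) : ℝ :=
  Real.sqrt (y ^ 2 + p ^ 2 / (1 + y ^ 2 - y ^ (d - 1) / uh ^ (d - 1)))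
    / (y * Real.sin m) ^ (d - 1)

private lemma hasDerivAt_hfun (d : ℕ) (hd : 4 ≤ d) (uh : ℝ) (y : ℝ) :
    HasDerivAt (fun y : ℝ => 1 + y ^ 2 - y ^ (d - 1) / uh ^ (d - 1))
      (2 * y - ((d : ℝ) - 1) * y ^ (d - 2) / uh ^ (d - 1)) y := by
  have e1 : d - 1 - 1 = d - 2 := by omega
  have e2 : ((d - 1 : ℕ) : ℝ) = (d : ℝ) - 1 := by
    rw [Nat.cast_sub (by omega : 1 ≤ d), Nat.cast_one]
  have h1 : HasDerivAt (fun y : ℝ => 1 + y ^ 2) (2 * y) y := by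
    simpa using (hasDerivAt_pow 2 y).const_add 1
  have h2 := (hasDerivAt_pow (d - 1) y).div_const (uh ^ (d - 1))
  rw [e1, e2] at h2
  exact h1.sub h2

private lemma div_two_two (p c q : ℝ) (hc : c ≠ 0) (hq : q ≠ 0) :
    2 * p / c / (2 * q) = p / (c * q) := by
  field_simp

private lemma iff_helper {A B c X R : ℝ} (hc : c ≠ 0) (h : A - B = c * (X - R)) :
    (A = B) ↔ (X = R) := by
  constructor
  · intro h'
    have h0 : c * (X - R) = 0 := by rw [← h, h', sub_self]
    have := (mul_eq_zero.1 h0).resolve_left hc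
    linarith [sub_eq_zero.1 this]
  · intro h'
    have : A - B = 0 := by rw [h, h', sub_self, mul_zero]
    linarith [sub_eq_zero.1 this]

/-- For a positive `C²` profile `u(μ)` on `(a, b) ⊆ (0, π)` with `h(u(μ)) > 0`,
the Euler–Lagrange equation of the area-density Lagrangian holds at every
`μ ∈ (a, b)` if and only if `u` satisfies the ODE
`u'' = −(d−2)h(u)u + u'((d−1)cot μ − (d−3)u'/u)
      + (u'/u)²(u²h'(u) + 2(d−1)cot(μ)u')/(2h(u))`. -/
theorem euler_lagrange_u_of_mu (d : ℕ) (hd : 4 ≤ d) (uh : ℝ) (huh : 0 < uh)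
    (a b : ℝ) (hab : a < b) (hsub : Set.Ioo a b ⊆ Set.Ioo 0 Real.pi)
    (u : ℝ → ℝ) (hu : ContDiffOn ℝ 2 u (Set.Ioo a b))
    (hupos : ∀ μ ∈ Set.Ioo a b, 0 < u μ)
    (hhpos : ∀ μ ∈ Set.Ioo a b,
      0 < 1 + (u μ) ^ 2 - (u μ) ^ (d - 1) / uh ^ (d - 1)) :
    (∀ μ ∈ Set.Ioo a b,
        deriv (fun t => deriv (fun p => areaLagrangianU d uh t (u t) p) (deriv u t)) μ
          = deriv (fun y => areaLagrangianU d uh μ y (deriv u μ)) (u μ)) ↔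
    (∀ μ ∈ Set.Ioo a b,
        deriv (deriv u) μ =
          -(((d : ℝ) - 2) * (1 + (u μ) ^ 2 - (u μ) ^ (d - 1) / uh ^ (d - 1)) * u μ)
          + deriv u μ * (((d : ℝ) - 1) * Real.cot μ - ((d : ℝ) - 3) * deriv u μ / u μ)
          + (deriv u μ / u μ) ^ 2 *
              (((u μ) ^ 2
                  * deriv (fun y : ℝ => 1 + y ^ 2 - y ^ (d - 1) / uh ^ (d - 1)) (u μ)
                + 2 * ((d : ℝ) - 1) * Real.cot μ * deriv u μ)
              / (2 * (1 + (u μ) ^ 2 - (u μ) ^ (d - 1) / uh ^ (d - 1))))) := by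
  have hopen : IsOpen (Set.Ioo a b) := isOpen_Ioo
  have huhne : (0:ℝ) < uh ^ (d - 1) := pow_pos huh _
  -- pointwise profile derivative formula (in p)
  have φeq : ∀ t ∈ Set.Ioo a b,
      deriv (fun p => areaLagrangianU d uh t (u t) p) (deriv u t)
        = deriv u t /
            ((1 + u t ^ 2 - u t ^ (d - 1) / uh ^ (d - 1)) *
              Real.sqrt (u t ^ 2 + (deriv u t) ^ 2
                / (1 + u t ^ 2 - u t ^ (d - 1) / uh ^ (d - 1))))
            / (u t * Real.sin t) ^ (d - 1) := by
    intro t ht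
    have hUt : 0 < u t := hupos t ht
    have hHt : 0 < 1 + u t ^ 2 - u t ^ (d - 1) / uh ^ (d - 1) := hhpos t ht
    have hSt : 0 < Real.sin t :=
      Real.sin_pos_of_pos_of_lt_pi (hsub ht).1 (hsub ht).2
    have hRt : 0 < u t ^ 2 + (deriv u t) ^ 2
        / (1 + u t ^ 2 - u t ^ (d - 1) / uh ^ (d - 1)) := by positivity
    have h1 : HasDerivAt (fun p : ℝ => u t ^ 2 + p ^ 2
        / (1 + u t ^ 2 - u t ^ (d - 1) / uh ^ (d - 1)))
        (2 * deriv u t / (1 + u t ^ 2 - u t ^ (d - 1) / uh ^ (d - 1))) (deriv u t) := by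
      have h0 := ((hasDerivAt_pow 2 (deriv u t)).div_const
          (1 + u t ^ 2 - u t ^ (d - 1) / uh ^ (d - 1))).const_add (u t ^ 2)
      refine h0.congr_deriv ?_
      push_cast
      ring
    have h2 := (h1.sqrt hRt.ne').div_const ((u t * Real.sin t) ^ (d - 1))
    have hQt : 0 < Real.sqrt (u t ^ 2 + (deriv u t) ^ 2
        / (1 + u t ^ 2 - u t ^ (d - 1) / uh ^ (d - 1))) := Real.sqrt_pos.2 hRt
    simp only [areaLagrangianU]
    rw [h2.deriv]
    rw [show 2 * deriv u t / (1 + u t ^ 2 - u t ^ (d - 1) / uh ^ (d - 1)) /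
        (2 * Real.sqrt (u t ^ 2 + deriv u t ^ 2 / (1 + u t ^ 2 - u t ^ (d - 1) / uh ^ (d - 1))))
        = deriv u t / ((1 + u t ^ 2 - u t ^ (d - 1) / uh ^ (d - 1)) *
          Real.sqrt (u t ^ 2 + deriv u t ^ 2 / (1 + u t ^ 2 - u t ^ (d - 1) / uh ^ (d - 1))))
      from div_two_two _ _ _ hHt.ne' hQt.ne']
  refine forall_congr' fun μ => imp_congr_right fun hμ => ?_
  have hμ' := hsub hμ
  have hS : 0 < Real.sin μ := Real.sin_pos_of_pos_of_lt_pi hμ'.1 hμ'.2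
  have hU : 0 < u μ := hupos μ hμ
  have hH : 0 < 1 + u μ ^ 2 - u μ ^ (d - 1) / uh ^ (d - 1) := hhpos μ hμ
  have hR : 0 < u μ ^ 2 + (deriv u μ) ^ 2
      / (1 + u μ ^ 2 - u μ ^ (d - 1) / uh ^ (d - 1)) := by positivity
  have hQ : 0 < Real.sqrt (u μ ^ 2 + (deriv u μ) ^ 2
      / (1 + u μ ^ 2 - u μ ^ (d - 1) / uh ^ (d - 1))) := Real.sqrt_pos.2 hR
  have hW : (0:ℝ) < (u μ * Real.sin μ) ^ (d - 1) := by positivity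
  -- derivatives of u
  have hcd : ContDiffAt ℝ 2 u μ := hu.contDiffAt (hopen.mem_nhds hμ)
  have hu1 : HasDerivAt u (deriv u μ) μ :=
    (hcd.differentiableAt two_ne_zero).hasDerivAt
  have hdu : ContDiffOn ℝ 1 (deriv u) (Set.Ioo a b) :=
    hu.deriv_of_isOpen hopen (by norm_num)
  have hu2 : HasDerivAt (deriv u) (deriv (deriv u) μ) μ :=
    ((hdu.contDiffAt (hopen.mem_nhds hμ)).differentiableAt one_ne_zero).hasDerivAt
  -- rewrite LHS outer derivative using the pointwise formula
  have hev : (fun t => deriv (fun p => areaLagrangianU d uh t (u t) p) (deriv u t))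
      =ᶠ[nhds μ] fun t => deriv u t /
            ((1 + u t ^ 2 - u t ^ (d - 1) / uh ^ (d - 1)) *
              Real.sqrt (u t ^ 2 + (deriv u t) ^ 2
                / (1 + u t ^ 2 - u t ^ (d - 1) / uh ^ (d - 1))))
            / (u t * Real.sin t) ^ (d - 1) :=
    Filter.eventuallyEq_of_mem (hopen.mem_nhds hμ) φeq
  rw [hev.deriv_eq]
  -- build HasDerivAt for the big function
  have hHμ : HasDerivAt (fun t => 1 + u t ^ 2 - u t ^ (d - 1) / uh ^ (d - 1))
      ((2 * u μ - ((d : ℝ) - 1) * u μ ^ (d - 2) / uh ^ (d - 1)) * deriv u μ) μ := by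
    exact (hasDerivAt_hfun d hd uh (u μ)).comp μ hu1
  have hIn : HasDerivAt (fun t => u t ^ 2 + (deriv u t) ^ 2
      / (1 + u t ^ 2 - u t ^ (d - 1) / uh ^ (d - 1)))
      ((2 : ℕ) * u μ ^ 1 * deriv u μ +
        ((2 : ℕ) * deriv u μ ^ 1 * deriv (deriv u) μ *
            (1 + u μ ^ 2 - u μ ^ (d - 1) / uh ^ (d - 1)) -
          deriv u μ ^ 2 *
            ((2 * u μ - ((d : ℝ) - 1) * u μ ^ (d - 2) / uh ^ (d - 1)) * deriv u μ)) /
          (1 + u μ ^ 2 - u μ ^ (d - 1) / uh ^ (d - 1)) ^ 2) μ :=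
    (hu1.pow 2).add ((hu2.pow 2).div hHμ hH.ne')
  have hQd := hIn.sqrt hR.ne'
  have hDen := hHμ.mul hQd
  have hWd : HasDerivAt (fun t => (u t * Real.sin t) ^ (d - 1))
      ((d - 1 : ℕ) * (u μ * Real.sin μ) ^ (d - 1 - 1) *
        (deriv u μ * Real.sin μ + u μ * Real.cos μ)) μ :=
    (hu1.mul (Real.hasDerivAt_sin μ)).pow (d - 1)
  have hden_ne : (1 + u μ ^ 2 - u μ ^ (d - 1) / uh ^ (d - 1)) *
      Real.sqrt (u μ ^ 2 + (deriv u μ) ^ 2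
        / (1 + u μ ^ 2 - u μ ^ (d - 1) / uh ^ (d - 1))) ≠ 0 := by positivity
  have hFb := (hu2.div hDen hden_ne).div hWd hW.ne'
  simp only [Pi.div_def, Pi.mul_def] at hFb
  rw [hFb.deriv]
  -- compute the y-derivative on the RHS of EL
  simp only [areaLagrangianU]
  have hy1 := ((hasDerivAt_const (u μ) ((deriv u μ) ^ 2)).div
      (hasDerivAt_hfun d hd uh (u μ)) hH.ne')
  have hy2 := ((hasDerivAt_pow 2 (u μ)).add hy1).sqrt hR.ne'
  have hy3 := hy2.div ((hasDerivAt_mul_const (Real.sin μ)).pow (d - 1)) hW.ne'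
  simp only [Pi.div_def, Pi.mul_def, Pi.add_def, Pi.pow_def] at hy3
  rw [hy3.deriv, (hasDerivAt_hfun d hd uh (u μ)).deriv, Real.cot_eq_cos_div_sin]
  have e1 : d - 1 - 1 = d - 2 := by omega
  have e2 : ((d - 1 : ℕ) : ℝ) = (d : ℝ) - 1 := by
    rw [Nat.cast_sub (by omega : 1 ≤ d), Nat.cast_one]
  have e3 : u μ ^ (d - 1) = u μ ^ (d - 2) * u μ := by
    rw [show d - 1 = (d - 2) + 1 by omega, pow_succ]
  have e4 : (u μ * Real.sin μ) ^ (d - 1)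
      = (u μ * Real.sin μ) ^ (d - 2) * (u μ * Real.sin μ) := by
    rw [show d - 1 = (d - 2) + 1 by omega, pow_succ]
  simp only [e1, e2, e3, e4, pow_one, Nat.cast_ofNat] at hH hR hQ hW ⊢
  set S := Real.sin μ with hSdef
  set Co := Real.cos μ with hCdef
  set U := u μ with hUdef
  set P := deriv u μ with hPdef
  set X := deriv (deriv u) μ with hXdef
  set E := uh ^ (d - 1) with hEdef
  set K := U ^ (d - 2) with hKdef
  set V := (U * S) ^ (d - 2) with hVdef
  set n := (d : ℝ) with hndef
  set H := 1 + U ^ 2 - K * U / E with hHdef2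
  set Hp := 2 * U - (n - 1) * K / E with hHpdef
  set Q := Real.sqrt (U ^ 2 + P ^ 2 / H) with hQdef
  have hQ2 : Q ^ 2 = U ^ 2 + P ^ 2 / H := by
    rw [hQdef]; exact Real.sq_sqrt hR.le
  have hV : 0 < V := by rw [hVdef]; positivity
  clear_value S Co U P X E K V n H Hp Q
  refine iff_helper (c := U ^ 2 / (H * Q ^ 3 * (V * (U * S)))) (by positivity) ?_
  have q3 : Q ^ 3 = (U ^ 2 + P ^ 2 / H) * Q := by rw [pow_succ, hQ2]
  have q4 : Q ^ 4 = (U ^ 2 + P ^ 2 / H) ^ 2 := by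
    rw [show (4:ℕ) = 2*2 from rfl, pow_mul, hQ2]
  have q5 : Q ^ 5 = (U ^ 2 + P ^ 2 / H) ^ 2 * Q := by rw [pow_succ, q4]
  have q6 : Q ^ 6 = (U ^ 2 + P ^ 2 / H) ^ 3 := by
    rw [show (6:ℕ) = 2*3 from rfl, pow_mul, hQ2]
  have q7 : Q ^ 7 = (U ^ 2 + P ^ 2 / H) ^ 3 * Q := by rw [pow_succ, q6]
  have q8 : Q ^ 8 = (U ^ 2 + P ^ 2 / H) ^ 4 := by
    rw [show (8:ℕ) = 2*4 from rfl, pow_mul, hQ2]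
  have q9 : Q ^ 9 = (U ^ 2 + P ^ 2 / H) ^ 4 * Q := by rw [pow_succ, q8]
  have q10 : Q ^ 10 = (U ^ 2 + P ^ 2 / H) ^ 5 := by
    rw [show (10:ℕ) = 2*5 from rfl, pow_mul, hQ2]
  field_simp
  ring_nf
  simp only [q10, q9, q8, q7, q6, q5, q4, q3, hQ2]
  field_simp
  ring
end
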